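/- arXiv:1606.03351 — 3 statements merged into one kernel-verified Lean document; each statement's English description precedes it below -/
import Mathlib

section
/- For every prime p ≥ 5, the sum ∑_{n=0}^{p-1} C_n of Catalan numbers is congruent to 1 modulo p if p ≡ 1 (mod 3), and congruent to -2 modulo p if p ≡ 2 (mod 3). -/
/-!
Write `B n` for `centralBinom n`. Since `B (n + 1) + 2 * C n = 4 * B n`, telescoping gives
`2 * ∑_{n<p} C n = 3 * ∑_{n<p} B n + 1 - B p`, and `B p ≡ 2` by Lucas. Modulo `p` one has
`B n ≡ (-4)^n * choose ((p-1)/2) n` for `n < p`, so by the binomial theorem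
`∑_{n<p} B n ≡ (-3)^((p-1)/2)`, which by Euler's criterion and quadratic reciprocity is the
Legendre symbol `(p / 3)`. Hence `2 * ∑ C n ≡ 3 * (p / 3) - 1`, which is `2` or `-4`.
-/

open Finset Nat

theorem centralBinom_succ_add_two_mul_catalan (n : ℕ) :
    centralBinom (n + 1) + 2 * catalan n = 4 * centralBinom n := by
  apply Nat.eq_of_mul_eq_mul_left (show 0 < n + 1 by omega)
  rw [mul_add, succ_mul_centralBinom_succ, mul_left_comm, succ_mul_catalan_eq_centralBinom]
  ring

theorem two_mul_sum_range_catalan {R : Type*} [CommRing R] (N : ℕ) :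
    2 * ∑ n ∈ range N, (catalan n : R) =
      3 * ∑ n ∈ range N, (centralBinom n : R) + 1 - centralBinom N := by
  induction N with
  | zero => simp
  | succ N ih =>
    have key := congrArg (Nat.cast (R := R)) (centralBinom_succ_add_two_mul_catalan N)
    push_cast at key
    rw [sum_range_succ, sum_range_succ]
    linear_combination ih + key

theorem natCast_centralBinom_self (p : ℕ) [Fact p.Prime] : (centralBinom p : ZMod p) = 2 := by
  have h := Choose.choose_mul_mul_modEq_choose_nat (p := p) (a := 2) (b := 1)
  rw [mul_one, mul_comm] at h
  exact_mod_cast (ZMod.natCast_eq_natCast_iff _ _ _).mpr h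

/-- As `p / 2 ≡ -1/2` modulo `p`, this is `B n = (-4)^n * choose (-1/2) n`: both sides satisfy
`(n + 1) * x (n + 1) = 2 * (2 * n + 1) * x n`, and `n + 1` is invertible for `n + 1 < p`. -/
theorem natCast_centralBinom_eq_neg_four_pow_mul_choose {p : ℕ} [Fact p.Prime] (hp : p ≠ 2)
    {n : ℕ} (hn : n < p) :
    (centralBinom n : ZMod p) = (-4) ^ n * (p / 2).choose n := by
  induction n with
  | zero => simp
  | succ n ih =>
    have hodd : p % 2 = 1 := (Fact.out : p.Prime).eq_two_or_odd.resolve_left hp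
    have half : 2 * ((p / 2 : ℕ) : ZMod p) + 1 = 0 := by
      have : ((2 * (p / 2) + 1 : ℕ) : ZMod p) = 0 := by
        rw [show 2 * (p / 2) + 1 = p by omega, ZMod.natCast_self]
      exact_mod_cast this
    have hB := congrArg (Nat.cast (R := ZMod p)) (succ_mul_centralBinom_succ n)
    push_cast at hB
    have hC : ((p / 2).choose (n + 1) : ZMod p) * (n + 1) =
        (p / 2).choose n * ((p / 2 : ℕ) - n) := by
      rcases le_or_gt n (p / 2) with h | h
      · have := congrArg (Nat.cast (R := ZMod p)) ((p / 2).choose_succ_right_eq n)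
        push_cast [Nat.cast_sub h] at this
        exact this
      · simp [choose_eq_zero_of_lt h, choose_eq_zero_of_lt (h.trans n.lt_succ_self)]
    have hunit : ((n + 1 : ℕ) : ZMod p) ≠ 0 := by
      rw [Ne, ZMod.natCast_eq_zero_iff]
      exact Nat.not_dvd_of_pos_of_lt n.succ_pos hn
    apply mul_left_cancel₀ hunit
    push_cast
    rw [hB, ih (by omega)]
    linear_combination (-(-4 : ZMod p) ^ (n + 1)) * hC
      + 2 * (-4 : ZMod p) ^ n * ((p / 2).choose n : ZMod p) * half

theorem sum_range_natCast_centralBinom_prime {p : ℕ} [Fact p.Prime] (hp : p ≠ 2) :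
    ∑ n ∈ range p, (centralBinom n : ZMod p) = (-3) ^ (p / 2) := by
  have hm : p / 2 + 1 ≤ p := by have := (Fact.out : p.Prime).two_le; omega
  calc ∑ n ∈ range p, (centralBinom n : ZMod p)
      = ∑ n ∈ range (p / 2 + 1), (-4) ^ n * ((p / 2).choose n : ZMod p) := by
        rw [sum_congr rfl fun n hn ↦
          natCast_centralBinom_eq_neg_four_pow_mul_choose hp (mem_range.mp hn)]
        refine (sum_subset (range_subset_range.mpr hm) fun k _ hk ↦ ?_).symm
        rw [choose_eq_zero_of_lt (by simpa using hk), cast_zero, mul_zero]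
    _ = (-4 + 1) ^ (p / 2) := by simp [add_pow]
    _ = (-3) ^ (p / 2) := by norm_num

theorem legendreSym.at_neg_three {p : ℕ} [Fact p.Prime] (hp : p ≠ 2) :
    legendreSym p (-3) = legendreSym 3 p := by
  have : Fact (Nat.Prime 3) := ⟨Nat.prime_three⟩
  have hodd : p % 2 = 1 := (Fact.out : p.Prime).eq_two_or_odd.resolve_left hp
  rw [show (-3 : ℤ) = -(3 : ℕ) by norm_num, legendreSym.at_neg hp,
    legendreSym.quadratic_reciprocity' (by norm_num) hp, ZMod.χ₄_eq_neg_one_pow hodd,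
    show 3 / 2 * (p / 2) = p / 2 by omega, ← mul_assoc, ← pow_add,
    (Even.add_self _).neg_one_pow, one_mul]

theorem neg_three_pow_div_two {p : ℕ} [Fact p.Prime] (hp : p ≠ 2) :
    (-3 : ZMod p) ^ (p / 2) = legendreSym 3 p := by
  rw [← legendreSym.at_neg_three hp, legendreSym.eq_pow]
  push_cast
  rfl

theorem two_mul_sum_range_catalan_prime {p : ℕ} [Fact p.Prime] (hp : p ≠ 2) :
    2 * ∑ n ∈ range p, (catalan n : ZMod p) = 3 * legendreSym 3 p - 1 := by
  rw [two_mul_sum_range_catalan, sum_range_natCast_centralBinom_prime hp,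
    natCast_centralBinom_self, neg_three_pow_div_two hp]
  ring

theorem sum_catalan_mod_p (p : ℕ) (hp : p.Prime) (hp5 : 5 ≤ p) :
    (p % 3 = 1 → (∑ n ∈ Finset.range p, (catalan n : ZMod p)) = 1) ∧
    (p % 3 = 2 → (∑ n ∈ Finset.range p, (catalan n : ZMod p)) = -2) := by
  have : Fact p.Prime := ⟨hp⟩
  have hp2 : p ≠ 2 := by omega
  have h2 : (2 : ZMod p) ≠ 0 := Ring.two_ne_zero (by rwa [ZMod.ringChar_zmod_n])
  have hsum := two_mul_sum_range_catalan_prime hp2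
  rw [legendreSym.mod] at hsum
  refine ⟨fun h ↦ mul_left_cancel₀ h2 ?_, fun h ↦ mul_left_cancel₀ h2 ?_⟩
  · rw [hsum, show (p : ℤ) % (3 : ℕ) = 1 by omega]
    norm_num
  · rw [hsum, show (p : ℤ) % (3 : ℕ) = 2 by omega, show legendreSym 3 2 = -1 by decide]
    norm_num
end

section
/- For every prime p ≥ 5 and every positive integer r, the sum ∑_{n=0}^{rp-1} C_n of Catalan numbers is congruent to β_r modulo p if p ≡ 1 (mod 3), and congruent to -γ_r modulo p if p ≡ 2 (mod 3), where β_r = ∑_{n=0}^{r-1} C_n and γ_r = ∑_{n=0}^{r-1} (3n+2)·C_n. -/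
/-!
Write `n = j * p + t` with `t < p`. Lucas's theorem applied to
`C_n = binom(2n, n) - binom(2n, n + 1)` gives `C_{jp+t} ≡ binom(2j, j) C_t` for `2t < p`,
`C_{jp+t} ≡ 0` for `p ≤ 2t < 2p - 2`, and `C_{jp+p-1} ≡ C_j - 2 binom(2j, j)`. So the `j`-th
block of `p` consecutive terms sums to `C_j + (S - 2) binom(2j, j)`, with `S = ∑_{t ≤ (p-1)/2} C_t`.

As `(p - 1)/2 ≡ -1/2`, one has `-2 C_t ≡ (-4)^(t+1) binom((p+1)/2, t+1)` for `t ≤ (p-1)/2`, and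
the binomial theorem gives `2S ≡ 1 - (-3)^((p+1)/2) = 1 + 3 (-3/p)`. By quadratic reciprocity
`(-3/p) = (p/3)`, so `S ≡ 2` when `p ≡ 1 (mod 3)`, making each block `≡ C_j`, and `S ≡ -1`
when `p ≡ 2 (mod 3)`, making it `≡ C_j - 3 (j + 1) C_j = -(3j + 2) C_j`.
-/

open Finset

theorem sum_range_mul_eq_sum_sum {M : Type*} [AddCommMonoid M] (f : ℕ → M) (r p : ℕ) :
    ∑ n ∈ range (r * p), f n = ∑ j ∈ range r, ∑ t ∈ range p, f (j * p + t) := by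
  induction r with
  | zero => simp
  | succ r ih => rw [add_mul, one_mul, sum_range_add, ih, sum_range_succ]

theorem catalan_add_choose_eq_centralBinom (n : ℕ) :
    catalan n + (2 * n).choose (n + 1) = n.centralBinom := by
  refine Nat.eq_of_mul_eq_mul_left n.succ_pos ?_
  have h := Nat.choose_succ_right_eq (2 * n) n
  rw [show 2 * n - n = n by omega] at h
  rw [mul_add, succ_mul_catalan_eq_centralBinom, Nat.centralBinom_eq_two_mul_choose]
  linarith

theorem catalan_eq_centralBinom_sub_choose {R : Type*} [Ring R] (n : ℕ) :
    (catalan n : R) = n.centralBinom - (2 * n).choose (n + 1) := by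
  rw [← catalan_add_choose_eq_centralBinom, Nat.cast_add, add_sub_cancel_right]

theorem ZMod.natCast_ne_zero_of_lt {p a : ℕ} (h0 : 0 < a) (h : a < p) : (a : ZMod p) ≠ 0 :=
  fun ha => Nat.not_dvd_of_pos_of_lt h0 h ((ZMod.natCast_eq_zero_iff a p).mp ha)

theorem ZMod.two_mul_natCast_half {p : ℕ} (hodd : p % 2 = 1) :
    2 * ((p / 2 : ℕ) : ZMod p) = -1 := by
  have h := congrArg (Nat.cast : ℕ → ZMod p)
    (Nat.two_mul_div_two_add_one_of_odd (Nat.odd_iff.mpr hodd))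
  push_cast [ZMod.natCast_self] at h
  linear_combination h

section

variable {p : ℕ} [Fact p.Prime]

theorem ZMod.natCast_choose_mul_add {a b c d : ℕ} (hb : b < p) (hd : d < p) :
    ((a * p + b).choose (c * p + d) : ZMod p) = b.choose d * a.choose c := by
  have hdiv {x y : ℕ} (hy : y < p) : (x * p + y) / p = x := by
    rw [add_comm, Nat.add_mul_div_right _ _ (by omega), Nat.div_eq_of_lt hy, zero_add]
  have h := (ZMod.natCast_eq_natCast_iff _ _ _).mpr
    (Choose.choose_modEq_choose_mod_mul_choose_div_nat (p := p) (n := a * p + b) (k := c * p + d))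
  rwa [Nat.mul_add_mod_self_right, Nat.mod_eq_of_lt hb, Nat.mul_add_mod_self_right,
    Nat.mod_eq_of_lt hd, hdiv hb, hdiv hd, Nat.cast_mul] at h

theorem catalan_mul_add_of_two_mul_lt (j : ℕ) {t : ℕ} (ht : 2 * t < p) :
    (catalan (j * p + t) : ZMod p) = j.centralBinom * catalan t := by
  have hp := (Fact.out : p.Prime).two_le
  rw [catalan_eq_centralBinom_sub_choose, Nat.centralBinom_eq_two_mul_choose,
    show 2 * (j * p + t) = 2 * j * p + 2 * t by ring, add_assoc,
    ZMod.natCast_choose_mul_add ht (by omega), ZMod.natCast_choose_mul_add ht (by omega),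
    catalan_eq_centralBinom_sub_choose, Nat.centralBinom_eq_two_mul_choose,
    Nat.centralBinom_eq_two_mul_choose]
  ring

theorem catalan_mul_add_eq_zero (j : ℕ) {t : ℕ} (ht : p ≤ 2 * t) (ht' : t + 1 < p) :
    (catalan (j * p + t) : ZMod p) = 0 := by
  rw [catalan_eq_centralBinom_sub_choose, Nat.centralBinom_eq_two_mul_choose,
    show 2 * (j * p + t) = (2 * j + 1) * p + (2 * t - p) by
      zify [ht]; ring, add_assoc,
    ZMod.natCast_choose_mul_add (by omega) (by omega),
    ZMod.natCast_choose_mul_add (by omega) (by omega),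
    Nat.choose_eq_zero_of_lt (show 2 * t - p < t by omega),
    Nat.choose_eq_zero_of_lt (show 2 * t - p < t + 1 by omega)]
  simp

theorem catalan_mul_add_pred (j : ℕ) :
    (catalan (j * p + (p - 1)) : ZMod p) = catalan j - 2 * j.centralBinom := by
  have hp := (Fact.out : p.Prime).two_le
  rw [catalan_eq_centralBinom_sub_choose, Nat.centralBinom_eq_two_mul_choose,
    show 2 * (j * p + (p - 1)) = (2 * j + 1) * p + (p - 2) by
      zify [hp, show 1 ≤ p by omega]; ring,
    show j * p + (p - 1) + 1 = (j + 1) * p + 0 by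
      zify [show 1 ≤ p by omega]; ring,
    ZMod.natCast_choose_mul_add (by omega) (by omega),
    ZMod.natCast_choose_mul_add (by omega) (by omega),
    Nat.choose_eq_zero_of_lt (show p - 2 < p - 1 by omega), Nat.choose_zero_right,
    Nat.choose_succ_succ, catalan_eq_centralBinom_sub_choose j, Nat.centralBinom_eq_two_mul_choose]
  push_cast
  ring

theorem sum_range_catalan_mul_add (hodd : p % 2 = 1) (j : ℕ) :
    ∑ t ∈ range p, (catalan (j * p + t) : ZMod p) =
      (∑ t ∈ range (p / 2 + 1), (catalan t : ZMod p)) * j.centralBinom +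
        (catalan j - 2 * j.centralBinom) := by
  have hp := (Fact.out : p.Prime).two_le
  have hvanish : ∀ t ∈ Ico (p / 2 + 1) (p - 1), (catalan (j * p + t) : ZMod p) = 0 := by
    intro t ht
    rw [mem_Ico] at ht
    exact catalan_mul_add_eq_zero j (by omega) (by omega)
  rw [show range p = range (p - 1 + 1) by rw [Nat.sub_add_cancel (by omega)], sum_range_succ,
    ← sum_range_add_sum_Ico _ (show p / 2 + 1 ≤ p - 1 by omega), sum_eq_zero hvanish, add_zero,
    catalan_mul_add_pred, sum_mul]
  congr 1
  refine sum_congr rfl fun t ht => ?_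
  rw [catalan_mul_add_of_two_mul_lt j (by rw [mem_range] at ht; omega), mul_comm]

/-- Since `p / 2 = -1/2` in `ZMod p`, this is `binom(2t, t) = (-4)^t binom(-1/2, t)`. -/
theorem centralBinom_eq_neg_four_pow_mul_choose_half (hodd : p % 2 = 1) {t : ℕ}
    (ht : t ≤ p / 2) :
    (t.centralBinom : ZMod p) = (-4) ^ t * (p / 2).choose t := by
  induction t with
  | zero => simp
  | succ t ih =>
    have hcb := congrArg (Nat.cast : ℕ → ZMod p) (Nat.succ_mul_centralBinom_succ t)
    have hch := congrArg (Nat.cast : ℕ → ZMod p) (Nat.choose_succ_right_eq (p / 2) t)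
    push_cast [Nat.cast_sub (by omega : t ≤ p / 2)] at hcb hch
    refine mul_left_cancel₀ (ZMod.natCast_ne_zero_of_lt (a := t + 1) (by omega) (by omega)) ?_
    push_cast
    linear_combination hcb + 2 * (2 * (t : ZMod p) + 1) * ih (by omega) + 4 * (-4) ^ t * hch
      + 2 * (-4) ^ t * ((p / 2).choose t : ZMod p) * ZMod.two_mul_natCast_half hodd

theorem neg_two_mul_catalan_eq (hodd : p % 2 = 1) {t : ℕ} (ht : t ≤ p / 2) :
    -2 * (catalan t : ZMod p) = (-4) ^ (t + 1) * (p / 2 + 1).choose (t + 1) := by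
  have hp := (Fact.out : p.Prime).two_le
  have hcat := congrArg (Nat.cast : ℕ → ZMod p) (succ_mul_catalan_eq_centralBinom t)
  have hch := congrArg (Nat.cast : ℕ → ZMod p) (Nat.add_one_mul_choose_eq (p / 2) t)
  push_cast at hcat hch
  refine mul_left_cancel₀ (ZMod.natCast_ne_zero_of_lt (a := t + 1) (by omega) (by omega)) ?_
  push_cast
  linear_combination (-2) * hcat - 2 * centralBinom_eq_neg_four_pow_mul_choose_half hodd ht
    - 4 * (-4) ^ t * hch
    + 2 * (-4) ^ t * ((p / 2).choose t : ZMod p) * ZMod.two_mul_natCast_half hodd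

theorem legendreSym_neg_three (hp2 : p ≠ 2) : legendreSym p (-3) = legendreSym 3 p := by
  have : Fact (Nat.Prime 3) := ⟨Nat.prime_three⟩
  have hodd : p % 2 = 1 := (Fact.out : p.Prime).eq_two_or_odd.resolve_left hp2
  have hrec := legendreSym.quadratic_reciprocity' (p := 3) (q := p) (by norm_num) hp2
  norm_num at hrec
  have hsq : ((-1 : ℤ) ^ (p / 2)) * (-1) ^ (p / 2) = 1 := by
    rw [← pow_add, ← two_mul, pow_mul]; norm_num
  rw [show (-3 : ℤ) = -1 * 3 by norm_num, legendreSym.mul, legendreSym.at_neg_one hp2,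
    ZMod.χ₄_eq_neg_one_pow hodd, hrec, ← mul_assoc, hsq, one_mul]

theorem two_mul_sum_range_catalan_half (hp2 : p ≠ 2) :
    2 * ∑ t ∈ range (p / 2 + 1), (catalan t : ZMod p) = 3 * legendreSym 3 p + 1 := by
  have hodd : p % 2 = 1 := (Fact.out : p.Prime).eq_two_or_odd.resolve_left hp2
  have hsum : -2 * ∑ t ∈ range (p / 2 + 1), (catalan t : ZMod p) =
      (-4 + 1) ^ (p / 2 + 1) - 1 := by
    rw [mul_sum, sum_congr rfl fun t ht =>
      neg_two_mul_catalan_eq hodd (Nat.lt_succ_iff.mp (mem_range.mp ht)), add_pow,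
      sum_range_succ' _ (p / 2 + 1)]
    simp
  have heuler : (-3 : ZMod p) ^ (p / 2) = legendreSym 3 p := by
    simpa [legendreSym_neg_three hp2] using (legendreSym.eq_pow p (-3)).symm
  rw [pow_succ, show (-4 + 1 : ZMod p) = -3 by norm_num, heuler] at hsum
  linear_combination -hsum

end

theorem sum_catalan_rp_mod_p_general (p : ℕ) (hp : p.Prime) (hp5 : 5 ≤ p)
    (r : ℕ) :
    (p % 3 = 1 → (∑ n ∈ Finset.range (r * p), (catalan n : ZMod p)) =
      ∑ n ∈ Finset.range r, (catalan n : ZMod p)) ∧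
    (p % 3 = 2 → (∑ n ∈ Finset.range (r * p), (catalan n : ZMod p)) =
      -∑ n ∈ Finset.range r, ((3 * n + 2 : ℕ) * catalan n : ZMod p)) := by
  have : Fact p.Prime := ⟨hp⟩
  have hodd : p % 2 = 1 := hp.eq_two_or_odd.resolve_left (by omega)
  have h2 : (2 : ZMod p) ≠ 0 := mod_cast ZMod.natCast_ne_zero_of_lt (a := 2) two_pos (by omega)
  have hS := two_mul_sum_range_catalan_half (p := p) (by omega)
  rw [sum_range_mul_eq_sum_sum]
  constructor
  · intro h3
    have hε : legendreSym 3 p = 1 := by rw [legendreSym.mod, ← Int.natCast_mod, h3]; rfl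
    have hS2 : ∑ t ∈ range (p / 2 + 1), (catalan t : ZMod p) = 2 :=
      mul_left_cancel₀ h2 (by rw [hS, hε]; norm_num)
    refine sum_congr rfl fun j _ => ?_
    rw [sum_range_catalan_mul_add hodd, hS2]
    ring
  · intro h3
    have hε : legendreSym 3 p = -1 := by rw [legendreSym.mod, ← Int.natCast_mod, h3]; rfl
    have hS1 : ∑ t ∈ range (p / 2 + 1), (catalan t : ZMod p) = -1 :=
      mul_left_cancel₀ h2 (by rw [hS, hε]; norm_num)
    rw [← sum_neg_distrib]
    refine sum_congr rfl fun j _ => ?_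
    have hcat := congrArg (Nat.cast : ℕ → ZMod p) (succ_mul_catalan_eq_centralBinom j)
    push_cast at hcat ⊢
    rw [sum_range_catalan_mul_add hodd, hS1]
    linear_combination 3 * hcat

theorem sum_catalan_rp_mod_p (p : ℕ) (hp : p.Prime) (hp5 : 5 ≤ p)
    (r : ℕ) (hr : 0 < r) :
    (p % 3 = 1 → (∑ n ∈ Finset.range (r * p), (catalan n : ZMod p)) =
      ∑ n ∈ Finset.range r, (catalan n : ZMod p)) ∧
    (p % 3 = 2 → (∑ n ∈ Finset.range (r * p), (catalan n : ZMod p)) =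
      -∑ n ∈ Finset.range r, ((3 * n + 2 : ℕ) * catalan n : ZMod p)) :=
  sum_catalan_rp_mod_p_general p hp hp5 r
end

section
/- For any prime p ≥ 5, the double sum ∑_{n=0}^{p-1} ∑_{m=0}^{p-1} binomial(n+m, m)^2 is congruent to 1 modulo p if p ≡ 1 (mod 3), and congruent to -1 modulo p if p ≡ 2 (mod 3). -/
/-!
Terms with `n + m ≥ p` vanish mod `p`, so grouping the rest by `k = n + m` and applying
Vandermonde's identity `∑ᵢ C(k, i)² = C(2k, k)` leaves `∑_{k<p} C(2k, k)`. Modulo `p` one has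
`C(2k, k) ≡ (-4)ᵏ C((p-1)/2, k)`, so the sum is `(1 - 4)^((p-1)/2)`, which by Euler's criterion
is the Legendre symbol `(-3 / p)`; quadratic reciprocity turns this into `(p / 3)`.
-/

open Finset
open scoped NumberTheorySymbols

theorem Nat.Prime.cast_choose_add_eq_zero {p a b : ℕ} (hp : p.Prime) (ha : a < p) (hb : b < p)
    (hab : p ≤ a + b) : ((a + b).choose a : ZMod p) = 0 :=
  (ZMod.natCast_eq_zero_iff _ _).mpr (hp.dvd_choose_add ha hb hab)

theorem sum_range_sum_range_choose_sq_eq_sum_centralBinom {p : ℕ} (hp : p.Prime) :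
    ∑ n ∈ range p, ∑ m ∈ range p, ((n + m).choose m : ZMod p) ^ 2 =
      ∑ k ∈ range p, (k.centralBinom : ZMod p) := by
  calc ∑ n ∈ range p, ∑ m ∈ range p, ((n + m).choose m : ZMod p) ^ 2
      = ∑ n ∈ range p, ∑ m ∈ range (p - n), ((n + m).choose n : ZMod p) ^ 2 := by
        refine sum_congr rfl fun n hn => ?_
        rw [mem_range] at hn
        simp_rw [← Nat.choose_symm_add]
        symm
        refine sum_subset (range_subset_range.mpr (Nat.sub_le p n)) fun m hm hm' => ?_
        rw [mem_range] at hm hm'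
        rw [hp.cast_choose_add_eq_zero hn hm (by omega), zero_pow two_ne_zero]
    _ = ∑ k ∈ range p, ∑ i ∈ range (k + 1), ((i + (k - i)).choose i : ZMod p) ^ 2 :=
        (sum_range_diag_flip p fun n m => ((n + m).choose n : ZMod p) ^ 2).symm
    _ = ∑ k ∈ range p, (k.centralBinom : ZMod p) := by
        refine sum_congr rfl fun k _ => ?_
        rw [Nat.centralBinom_eq_two_mul_choose, ← Nat.sum_range_choose_sq]
        push_cast
        refine sum_congr rfl fun i hi => ?_
        rw [Nat.add_sub_cancel' (Nat.lt_succ_iff.mp (mem_range.mp hi))]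

theorem cast_centralBinom_eq_neg_four_pow_mul_choose {p : ℕ} [Fact p.Prime] (hodd : Odd p)
    {k : ℕ} (hk : k < p) :
    (k.centralBinom : ZMod p) = (-4) ^ k * ((p / 2).choose k : ZMod p) := by
  induction k with
  | zero => simp
  | succ k ih =>
    have hsucc : ((k + 1 : ℕ) : ZMod p) ≠ 0 := by
      rw [Ne, ZMod.natCast_eq_zero_iff]
      exact Nat.not_dvd_of_pos_of_lt k.succ_pos hk
    have htwo : 2 * ((p / 2 : ℕ) : ZMod p) = -1 := by
      have := congrArg (Nat.cast : ℕ → ZMod p) (Nat.two_mul_div_two_add_one_of_odd hodd)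
      rw [ZMod.natCast_self] at this
      push_cast at this
      linear_combination this
    have hstep : 2 * (2 * k + 1) * ((p / 2).choose k : ZMod p) =
        -4 * ((p / 2).choose k * (p / 2 - k : ℕ)) := by
      rcases le_or_gt k (p / 2) with hle | hlt
      · rw [Nat.cast_sub hle]
        linear_combination (2 * ((p / 2).choose k : ZMod p)) * htwo
      · simp [Nat.choose_eq_zero_of_lt hlt]
    apply mul_left_cancel₀ hsucc
    calc ((k + 1 : ℕ) : ZMod p) * ((k + 1).centralBinom : ZMod p)
        = 2 * (2 * k + 1) * (k.centralBinom : ZMod p) := by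
          have h := congrArg (Nat.cast : ℕ → ZMod p) (Nat.succ_mul_centralBinom_succ k)
          push_cast at h ⊢
          exact h
      _ = (-4) ^ k * (2 * (2 * k + 1) * ((p / 2).choose k : ZMod p)) := by
          rw [ih (by omega)]; ring
      _ = (-4) ^ k * (-4 * ((p / 2).choose k * (p / 2 - k : ℕ))) := by rw [hstep]
      _ = ((k + 1 : ℕ) : ZMod p) * ((-4) ^ (k + 1) * ((p / 2).choose (k + 1) : ZMod p)) := by
          rw [← Nat.cast_mul, ← Nat.choose_succ_right_eq]
          push_cast
          ring

theorem sum_range_pow_mul_choose {R : Type*} [CommSemiring R] (x : R) {n N : ℕ} (hN : n < N) :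
    ∑ k ∈ range N, x ^ k * (n.choose k : R) = (x + 1) ^ n := by
  rw [add_pow]
  refine (sum_subset (range_subset_range.mpr hN) fun k _ hk => ?_).symm.trans
    (sum_congr rfl fun k _ => by rw [one_pow, mul_one])
  rw [mem_range, not_lt] at hk
  rw [Nat.choose_eq_zero_of_lt hk, Nat.cast_zero, mul_zero]

theorem jacobiSym.neg_three {b : ℕ} (hb : Odd b) : J(-3 | b) = J(b | 3) := by
  have hχ : ZMod.χ₄ b = (-1) ^ (b / 2) := ZMod.χ₄_eq_neg_one_pow (Nat.odd_iff.mp hb)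
  have hqr := jacobiSym.quadratic_reciprocity (a := 3) (by decide) hb
  rw [show (3 : ℕ) / 2 * (b / 2) = b / 2 by omega] at hqr
  push_cast at hqr
  rw [jacobiSym.neg _ hb, hχ, hqr, ← mul_assoc, ← pow_add, ← two_mul, pow_mul, neg_one_sq,
    one_pow, one_mul]

theorem double_sum_choose_sq_mod_p (p : ℕ) (hp : p.Prime) (hp5 : 5 ≤ p) :
    (p % 3 = 1 → (∑ n ∈ Finset.range p, ∑ m ∈ Finset.range p,
      ((n + m).choose m : ZMod p) ^ 2) = 1) ∧
    (p % 3 = 2 → (∑ n ∈ Finset.range p, ∑ m ∈ Finset.range p,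
      ((n + m).choose m : ZMod p) ^ 2) = -1) := by
  have := Fact.mk hp
  have hodd : Odd p := hp.odd_of_ne_two (by omega)
  have hsum : ∑ n ∈ range p, ∑ m ∈ range p, ((n + m).choose m : ZMod p) ^ 2 =
      ((J((p % 3 : ℕ) | 3) : ℤ) : ZMod p) := by
    rw [sum_range_sum_range_choose_sq_eq_sum_centralBinom hp,
      sum_congr rfl fun k hk => cast_centralBinom_eq_neg_four_pow_mul_choose hodd
        (mem_range.mp hk),
      sum_range_pow_mul_choose _ (Nat.div_lt_self hp.pos one_lt_two)]
    rw [show (-4 + 1 : ZMod p) = ((-3 : ℤ) : ZMod p) by norm_num, ← legendreSym.eq_pow,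
      jacobiSym.legendreSym.to_jacobiSym, jacobiSym.neg_three hodd, jacobiSym.mod_left]
    norm_cast
  refine ⟨fun h => ?_, fun h => ?_⟩
  · rw [hsum, h, Nat.cast_one, jacobiSym.one_left, Int.cast_one]
  · rw [hsum, h, Nat.cast_two, jacobiSym.at_two (by decide), ZMod.χ₈_nat_eq_if_mod_eight]
    norm_num
end
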